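/- arXiv:1905.06395 — 3 statements merged into one kernel-verified Lean document; each statement's English description precedes it below -/
import Mathlib

section
/- Let $d \geq 1$ and $s \in (0,1/2)$. Then $\int_0^{r_0} \left(\int_0^{\sqrt{r_0^2 - t^2}} \frac{t\, r^{d-2}}{(t^2 + r^2)^{(d+2s)/2}}\,dr\right) dt = \frac{r_0^{1-2s}}{(d-1)(1-2s)}$ for every $r_0 > 0$, provided $d \geq 2$. -/
/-!
Swap the order of integration over the quarter disc `{t, r > 0, t² + r² < R²}`; Fubini applies
because the integrand is nonnegative and the iterated integral in the swapped order is finite.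
In that order the inner integral is elementary, `t (t² + r²)^(-α)` having antiderivative
`(t² + r²)^(1-α) / (2(1-α))`, and what remains is a difference of two power integrals in `r`.
-/

open MeasureTheory Set

def quarterDisc (R : ℝ) : Set (ℝ × ℝ) :=
  {p | 0 < p.1 ∧ 0 < p.2 ∧ p.1 ^ 2 + p.2 ^ 2 < R ^ 2}

section QuarterDisc

variable {R : ℝ}

lemma measurableSet_quarterDisc (R : ℝ) : MeasurableSet (quarterDisc R) := by
  simp only [quarterDisc, ofPred_and]
  exact (measurableSet_lt (by fun_prop) (by fun_prop)).inter
    ((measurableSet_lt (by fun_prop) (by fun_prop)).inter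
      (measurableSet_lt (by fun_prop) (by fun_prop)))

lemma mem_quarterDisc_iff (hR : 0 ≤ R) {t r : ℝ} :
    (t, r) ∈ quarterDisc R ↔ t ∈ Ioo 0 R ∧ r ∈ Ioo 0 √(R ^ 2 - t ^ 2) := by
  simp only [quarterDisc, mem_ofPred_eq, mem_Ioo]
  constructor
  · rintro ⟨ht, hr, hlt⟩
    exact ⟨⟨ht, by nlinarith⟩, hr, (Real.lt_sqrt hr.le).2 (by linarith)⟩
  · rintro ⟨⟨ht, -⟩, hr, hlt⟩
    exact ⟨ht, hr, by linarith [(Real.lt_sqrt hr.le).1 hlt]⟩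

lemma swap_mem_quarterDisc_iff {t r : ℝ} : (r, t) ∈ quarterDisc R ↔ (t, r) ∈ quarterDisc R := by
  simp only [quarterDisc, mem_ofPred_eq, add_comm (r ^ 2)]
  tauto

lemma indicator_quarterDisc_slice (hR : 0 ≤ R) (g : ℝ × ℝ → ℝ) (t : ℝ) :
    (fun r => (quarterDisc R).indicator g (t, r)) =
      if t ∈ Ioo 0 R then (Ioo 0 √(R ^ 2 - t ^ 2)).indicator (fun r => g (t, r)) else 0 := by
  ext r
  split_ifs with ht <;> simp [Set.indicator, mem_quarterDisc_iff hR, ht]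

lemma integral_indicator_quarterDisc_slice (hR : 0 ≤ R) (g : ℝ × ℝ → ℝ) (t : ℝ) :
    ∫ r, (quarterDisc R).indicator g (t, r) =
      (Ioo 0 R).indicator (fun t => ∫ r in Ioo 0 √(R ^ 2 - t ^ 2), g (t, r)) t := by
  rw [indicator_quarterDisc_slice hR]
  split_ifs with ht
  · rw [indicator_of_mem ht, MeasureTheory.integral_indicator measurableSet_Ioo]
  · rw [indicator_of_notMem ht, Pi.zero_def, MeasureTheory.integral_zero]

lemma indicator_quarterDisc_swap (g : ℝ × ℝ → ℝ) (t r : ℝ) :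
    (quarterDisc R).indicator g (t, r) = (quarterDisc R).indicator (g ∘ Prod.swap) (r, t) := by
  by_cases h : (t, r) ∈ quarterDisc R
  · rw [indicator_of_mem h, indicator_of_mem (swap_mem_quarterDisc_iff.2 h)]
    rfl
  · rw [indicator_of_notMem h, indicator_of_notMem (mt swap_mem_quarterDisc_iff.1 h)]

lemma integral_indicator_quarterDisc_slice' (hR : 0 ≤ R) (g : ℝ × ℝ → ℝ) (r : ℝ) :
    ∫ t, (quarterDisc R).indicator g (t, r) =
      (Ioo 0 R).indicator (fun r => ∫ t in Ioo 0 √(R ^ 2 - r ^ 2), g (t, r)) r := by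
  simp only [indicator_quarterDisc_swap g _ r, integral_indicator_quarterDisc_slice hR,
    Function.comp_apply, Prod.swap_prod_mk]

lemma intervalIntegral_eq_integral_indicator_Ioo {f : ℝ → ℝ} (hR : 0 ≤ R) :
    ∫ t in (0 : ℝ)..R, f t = ∫ t, (Ioo 0 R).indicator f t := by
  rw [intervalIntegral.integral_of_le hR, integral_Ioc_eq_integral_Ioo,
    MeasureTheory.integral_indicator measurableSet_Ioo]

theorem integral_integral_quarterDisc_swap {g : ℝ × ℝ → ℝ} (hR : 0 ≤ R)
    (hg : Integrable ((quarterDisc R).indicator g) (volume.prod volume)) :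
    ∫ t in (0 : ℝ)..R, ∫ r in (0 : ℝ)..√(R ^ 2 - t ^ 2), g (t, r) =
      ∫ r in (0 : ℝ)..R, ∫ t in (0 : ℝ)..√(R ^ 2 - r ^ 2), g (t, r) := by
  have hswap := integral_integral_swap (f := fun t r => (quarterDisc R).indicator g (t, r)) hg
  simp only [integral_indicator_quarterDisc_slice hR, integral_indicator_quarterDisc_slice' hR]
    at hswap
  simp only [intervalIntegral_eq_integral_indicator_Ioo hR,
    intervalIntegral.integral_of_le (Real.sqrt_nonneg _), integral_Ioc_eq_integral_Ioo]
  exact hswap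

lemma integrable_indicator_quarterDisc (hR : 0 ≤ R) {g : ℝ × ℝ → ℝ}
    (hgm : AEStronglyMeasurable g (volume.prod volume)) (hg0 : ∀ p ∈ quarterDisc R, 0 ≤ g p)
    (hslice : ∀ r ∈ Ioo 0 R, IntervalIntegrable (fun t => g (t, r)) volume 0 √(R ^ 2 - r ^ 2))
    (hint : IntervalIntegrable (fun r => ∫ t in (0 : ℝ)..√(R ^ 2 - r ^ 2), g (t, r)) volume 0 R) :
    Integrable ((quarterDisc R).indicator g) (volume.prod volume) := by
  rw [integrable_prod_iff' (hgm.indicator (measurableSet_quarterDisc R))]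
  refine ⟨ae_of_all _ fun r => ?_, ?_⟩
  · simp only [indicator_quarterDisc_swap g _ r, indicator_quarterDisc_slice hR]
    split_ifs with hr
    · rw [integrable_indicator_iff measurableSet_Ioo]
      exact (intervalIntegrable_iff_integrableOn_Ioo_of_le (Real.sqrt_nonneg _)).1 (hslice r hr)
    · exact integrable_zero _ _ _
  · have hnorm : ∀ p, ‖(quarterDisc R).indicator g p‖ = (quarterDisc R).indicator g p :=
      fun p => Real.norm_of_nonneg (indicator_nonneg hg0 p)
    simp only [hnorm, integral_indicator_quarterDisc_slice' hR]
    rw [integrable_indicator_iff measurableSet_Ioo]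
    refine ((intervalIntegrable_iff_integrableOn_Ioo_of_le hR).1 hint).congr_fun (fun r _ => ?_)
      measurableSet_Ioo
    dsimp only
    rw [intervalIntegral.integral_of_le (Real.sqrt_nonneg _), integral_Ioc_eq_integral_Ioo]

end QuarterDisc

lemma hasDerivAt_sq_add_rpow_div {c α : ℝ} (hc : 0 < c) (hα : α ≠ 1) (t : ℝ) :
    HasDerivAt (fun t => (t ^ 2 + c) ^ (1 - α) / (2 * (1 - α))) (t * (t ^ 2 + c) ^ (-α)) t := by
  have hbase : HasDerivAt (fun t : ℝ => t ^ 2 + c) (2 * t) t := by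
    simpa using (hasDerivAt_pow 2 t).add_const c
  refine ((hbase.rpow_const (p := 1 - α) (Or.inl (by positivity))).div_const _).congr_deriv ?_
  rw [show 1 - α - 1 = -α by ring]
  field_simp [sub_ne_zero.2 hα.symm]

lemma integral_mul_sq_add_rpow_neg {c α : ℝ} (hc : 0 < c) (hα : α ≠ 1) (a b : ℝ) :
    ∫ t in a..b, t * (t ^ 2 + c) ^ (-α) =
      ((b ^ 2 + c) ^ (1 - α) - (a ^ 2 + c) ^ (1 - α)) / (2 * (1 - α)) := by
  have hcont : Continuous fun t : ℝ => t * (t ^ 2 + c) ^ (-α) :=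
    continuous_id.mul ((by fun_prop : Continuous fun t : ℝ => t ^ 2 + c).rpow_const
      fun t => Or.inl (by positivity))
  rw [intervalIntegral.integral_eq_sub_of_hasDerivAt
    (fun t _ => hasDerivAt_sq_add_rpow_div hc hα t) (hcont.intervalIntegrable a b), sub_div]

lemma integral_mul_rpow_div_sq_add_sq_rpow (q : ℝ) {α R r : ℝ} (hα : α ≠ 1) (hr : 0 < r)
    (hrR : r ≤ R) :
    ∫ t in (0 : ℝ)..√(R ^ 2 - r ^ 2), t * r ^ q / (t ^ 2 + r ^ 2) ^ α =
      r ^ q * (R ^ (2 - 2 * α) - r ^ (2 - 2 * α)) / (2 * (1 - α)) := by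
  have hsq : ∀ x : ℝ, 0 ≤ x → (x ^ 2) ^ (1 - α) = x ^ (2 - 2 * α) := fun x hx => by
    rw [← Real.rpow_natCast, ← Real.rpow_mul hx]
    ring_nf
  have hintegrand : ∀ t : ℝ,
      t * r ^ q / (t ^ 2 + r ^ 2) ^ α = r ^ q * (t * (t ^ 2 + r ^ 2) ^ (-α)) := fun t => by
    rw [Real.rpow_neg (by positivity)]
    ring
  simp only [hintegrand, intervalIntegral.integral_const_mul,
    integral_mul_sq_add_rpow_neg (pow_pos hr 2) hα,
    Real.sq_sqrt (by nlinarith : 0 ≤ R ^ 2 - r ^ 2),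
    sub_add_cancel, ne_eq, OfNat.ofNat_ne_zero, not_false_eq_true, zero_pow, zero_add,
    hsq R (hr.le.trans hrR), hsq r hr.le]
  ring

lemma continuous_mul_rpow_div_sq_add_sq_rpow (q α : ℝ) {r : ℝ} (hr : r ≠ 0) :
    Continuous fun t : ℝ => t * r ^ q / (t ^ 2 + r ^ 2) ^ α := by
  have hpos : ∀ t : ℝ, 0 < t ^ 2 + r ^ 2 := fun t => by positivity
  exact (continuous_id.mul continuous_const).div
    ((by fun_prop : Continuous fun t : ℝ => t ^ 2 + r ^ 2).rpow_const fun t => Or.inl (hpos t).ne')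
    fun t => (Real.rpow_pos_of_pos (hpos t) α).ne'

lemma rpow_mul_rpow_sub_eqOn {q β R : ℝ} :
    EqOn (fun r => r ^ q * (R ^ β - r ^ β)) (fun r => R ^ β * r ^ q - r ^ (q + β)) (Ioi 0) :=
  fun r hr => by simp only [Real.rpow_add (mem_Ioi.1 hr)]; ring

lemma intervalIntegrable_rpow_mul_rpow_sub {q β R : ℝ} (hq : -1 < q) (hqβ : -1 < q + β)
    (hR : 0 ≤ R) : IntervalIntegrable (fun r => r ^ q * (R ^ β - r ^ β)) volume 0 R :=
  (((intervalIntegral.intervalIntegrable_rpow' hq).const_mul _).sub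
      (intervalIntegral.intervalIntegrable_rpow' hqβ)).congr_uIoo
    (rpow_mul_rpow_sub_eqOn.symm.mono (by simp [uIoo_of_le hR, Ioo_subset_Ioi_self]))

lemma integral_rpow_mul_rpow_sub {q β R : ℝ} (hq : -1 < q) (hqβ : -1 < q + β) (hR : 0 ≤ R) :
    ∫ r in (0 : ℝ)..R, r ^ q * (R ^ β - r ^ β) =
      R ^ (q + β + 1) * (1 / (q + 1) - 1 / (q + β + 1)) := by
  rw [intervalIntegral.integral_congr_uIoo
      (rpow_mul_rpow_sub_eqOn.mono (by simp [uIoo_of_le hR, Ioo_subset_Ioi_self])),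
    intervalIntegral.integral_sub ((intervalIntegral.intervalIntegrable_rpow' hq).const_mul _)
      (intervalIntegral.intervalIntegrable_rpow' hqβ),
    intervalIntegral.integral_const_mul, integral_rpow (Or.inl hq), integral_rpow (Or.inl hqβ),
    Real.zero_rpow (by linarith), Real.zero_rpow (by linarith), sub_zero, sub_zero,
    show q + β + 1 = β + (q + 1) by ring, Real.rpow_add' (y := β) (z := q + 1) hR (by linarith)]
  ring

theorem integral_quarterDisc_mul_rpow_div_sq_add_sq_rpow {q α R : ℝ} (hq : -1 < q)
    (hqα : 2 * α < q + 3) (hα : α ≠ 1) (hR : 0 ≤ R) :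
    ∫ t in (0 : ℝ)..R, ∫ r in (0 : ℝ)..√(R ^ 2 - t ^ 2), t * r ^ q / (t ^ 2 + r ^ 2) ^ α =
      R ^ (q + 3 - 2 * α) / ((q + 1) * (q + 3 - 2 * α)) := by
  set g : ℝ × ℝ → ℝ := fun p => p.1 * p.2 ^ q / (p.1 ^ 2 + p.2 ^ 2) ^ α
  have hqβ : -1 < q + (2 - 2 * α) := by linarith
  have hinner : EqOn (fun r => ∫ t in (0 : ℝ)..√(R ^ 2 - r ^ 2), g (t, r))
      (fun r => r ^ q * (R ^ (2 - 2 * α) - r ^ (2 - 2 * α)) / (2 * (1 - α))) (uIoo 0 R) := by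
    rw [uIoo_of_le hR]
    exact fun r hr => integral_mul_rpow_div_sq_add_sq_rpow q hα hr.1 hr.2.le
  have hg : Integrable ((quarterDisc R).indicator g) (volume.prod volume) := by
    refine integrable_indicator_quarterDisc hR (by fun_prop) (fun p hp => ?_) (fun r hr => ?_)
      (((intervalIntegrable_rpow_mul_rpow_sub hq hqβ hR).div_const _).congr_uIoo hinner.symm)
    · obtain ⟨ht, hr, -⟩ := hp
      positivity
    · exact (continuous_mul_rpow_div_sq_add_sq_rpow q α hr.1.ne').intervalIntegrable _ _
  refine (integral_integral_quarterDisc_swap (g := g) hR hg).trans ?_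
  rw [intervalIntegral.integral_congr_uIoo hinner, intervalIntegral.integral_div,
    integral_rpow_mul_rpow_sub hq hqβ hR, show q + (2 - 2 * α) + 1 = q + 3 - 2 * α by ring]
  have : q + 1 ≠ 0 := by linarith
  have : q + 3 - 2 * α ≠ 0 := by linarith
  have : 1 - α ≠ 0 := sub_ne_zero.2 (Ne.symm hα)
  field_simp
  ring

theorem stmt6 (d : ℕ) (hd : 2 ≤ d) (s : ℝ) (hs : s ∈ Set.Ioo (0:ℝ) (1/2))
    (r₀ : ℝ) (hr₀ : 0 < r₀) :
    (∫ t in (0:ℝ)..r₀, ∫ r in (0:ℝ)..Real.sqrt (r₀^2 - t^2),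
        t * r ^ ((d:ℝ) - 2) / (t^2 + r^2) ^ (((d:ℝ) + 2*s)/2)) =
      r₀ ^ (1 - 2*s) / (((d:ℝ) - 1) * (1 - 2*s)) := by
  have hd' : (2 : ℝ) ≤ d := by exact_mod_cast hd
  obtain ⟨hs0, hs1⟩ := hs
  rw [integral_quarterDisc_mul_rpow_div_sq_add_sq_rpow (by linarith) (by linarith)
    (by intro h; linarith) hr₀.le]
  congr 2 <;> ring
end

section
/- Let $\Omega \subset \mathbb{R}^d$ be a bounded measurable set, $s \in (0,1/2)$, and let $F_s(\rho) = \int_0^\rho \frac{\rho-r}{(1+r^2)^{(d+1+2s)/2}}\,dr$, extended to negative arguments by $F_s(\rho) = F_s(|\rho|)$ (it is even). Define $I_s[v] = \iint_{Q_\Omega} F_s\left(\frac{v(x)-v(y)}{|x-y|}\right)\frac{dx\,dy}{|x-y|^{d+2s-1}}$, where $Q_\Omega = (\mathbb{R}^d\times\mathbb{R}^d)\setminus(\Omega^c\times\Omega^c)$. Then for every measurable $v \colon \mathbb{R}^d \to \mathbb{R}$, $|v|_{W^{2s}_1(\Omega)} \leq C_1 + C_2\, I_s[v]$, where $C_1 =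 \iint_{\Omega\times\Omega} |x-y|^{-(d+2s-1)}\,dx\,dy < \infty$ and $C_2 = 1/F_s'(1)$, and $|v|_{W^{2s}_1(\Omega)} = \iint_{\Omega\times\Omega}\frac{|v(x)-v(y)|}{|x-y|^{d+2s}}\,dx\,dy$. -/
/-!
For `ρ ≥ 1` the weight `c r = (1 + r²) ^ (-(d + 1 + 2s)/2)` gives
`F_s(ρ) ≥ ∫₀¹ (ρ - r) c r dr ≥ (ρ - 1) F_s'(1)`, hence `ρ ≤ 1 + F_s(ρ) / F_s'(1)` for all `ρ ≥ 0`.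
Taking `ρ = |v x - v y| / |x - y|` and dividing by `|x - y| ^ (d + 2s - 1)` bounds the integrand of
the seminorm pointwise; integrating over `Ω × Ω ⊆ Q_Ω` gives the inequality. The constant `C₁` is
finite because `|z| ^ (-(d + 2s - 1))` is locally integrable, as `d + 2s - 1 < d`.
-/

open MeasureTheory Set Real Metric

lemma le_one_add_integral_sub_mul_div {c : ℝ → ℝ} (hc : Continuous c) (hc0 : ∀ r, 0 ≤ c r)
    (hJ : 0 < ∫ r in (0:ℝ)..1, c r) {ρ : ℝ} (hρ : 0 ≤ ρ) :
    ρ ≤ 1 + (∫ r in (0:ℝ)..ρ, (ρ - r) * c r) / ∫ r in (0:ℝ)..1, c r := by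
  have hint (a b : ℝ) : IntervalIntegrable (fun r => (ρ - r) * c r) volume a b :=
    ((continuous_const.sub continuous_id).mul hc).intervalIntegrable a b
  rcases le_or_gt ρ 1 with hρ1 | hρ1
  · have : 0 ≤ ∫ r in (0:ℝ)..ρ, (ρ - r) * c r :=
      intervalIntegral.integral_nonneg hρ fun r hr => mul_nonneg (by linarith [hr.2]) (hc0 r)
    linarith [div_nonneg this hJ.le]
  · have hunit : (ρ - 1) * ∫ r in (0:ℝ)..1, c r ≤ ∫ r in (0:ℝ)..1, (ρ - r) * c r := by
      rw [← intervalIntegral.integral_const_mul]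
      refine intervalIntegral.integral_mono_on zero_le_one
        ((hc.intervalIntegrable _ _).const_mul _) (hint 0 1) fun r hr => ?_
      exact mul_le_mul_of_nonneg_right (by linarith [hr.2]) (hc0 r)
    have hextend : (∫ r in (0:ℝ)..1, (ρ - r) * c r) ≤ ∫ r in (0:ℝ)..ρ, (ρ - r) * c r := by
      refine intervalIntegral.integral_mono_interval le_rfl zero_le_one hρ1.le ?_ (hint 0 ρ)
      filter_upwards [ae_restrict_mem measurableSet_Ioc] with r hr
      exact mul_nonneg (by linarith [hr.2]) (hc0 r)
    rw [← sub_le_iff_le_add', le_div_iff₀ hJ]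
    linarith

lemma continuous_one_add_sq_rpow (β : ℝ) : Continuous fun r : ℝ => (1 + r ^ 2) ^ β :=
  (continuous_const.add (continuous_pow 2)).rpow_const fun r =>
    Or.inl (by positivity : (0:ℝ) < 1 + r ^ 2).ne'

lemma integral_one_add_sq_rpow_pos (β : ℝ) : 0 < ∫ r in (0:ℝ)..1, (1 + r ^ 2) ^ β :=
  intervalIntegral.intervalIntegral_pos_of_pos
    ((continuous_one_add_sq_rpow β).intervalIntegrable _ _)
    (fun r => rpow_pos_of_pos (by positivity) _) zero_lt_one

lemma abs_le_one_add_div_integral_mul_integral (β ρ : ℝ) :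
    |ρ| ≤ 1 + 1 / (∫ r in (0:ℝ)..1, (1 + r ^ 2) ^ (-β)) *
      ∫ r in (0:ℝ)..|ρ|, (|ρ| - r) / (1 + r ^ 2) ^ β := by
  have hdiv (r : ℝ) : (|ρ| - r) / (1 + r ^ 2) ^ β = (|ρ| - r) * (1 + r ^ 2) ^ (-β) := by
    rw [rpow_neg (by positivity), div_eq_mul_inv]
  simp only [hdiv, one_div_mul_eq_div]
  exact le_one_add_integral_sub_mul_div (continuous_one_add_sq_rpow _)
    (fun r => (rpow_pos_of_pos (by positivity) _).le) (integral_one_add_sq_rpow_pos _)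
    (abs_nonneg ρ)

lemma ofReal_abs_div_rpow_le {G : ℝ → ℝ} {C γ : ℝ} (hC : 0 ≤ C) (hG : ∀ ρ, |ρ| ≤ 1 + C * G ρ)
    (hγ : γ ≠ 0) (δ : ℝ) {t : ℝ} (ht : 0 ≤ t) :
    ENNReal.ofReal (|δ| / t ^ γ) ≤
      ENNReal.ofReal (1 / t ^ (γ - 1)) +
        ENNReal.ofReal C * ENNReal.ofReal (G (δ / t) / t ^ (γ - 1)) := by
  rcases ht.eq_or_lt with rfl | ht
  · simp [zero_rpow hγ]
  have hreal : |δ| / t ^ γ ≤ 1 / t ^ (γ - 1) + C * (G (δ / t) / t ^ (γ - 1)) := calc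
    |δ| / t ^ γ = |δ / t| / t ^ (γ - 1) := by
      rw [rpow_sub_one ht.ne', abs_div, abs_of_pos ht, div_div_div_cancel_right₀ ht.ne']
    _ ≤ (1 + C * G (δ / t)) / t ^ (γ - 1) := by gcongr; exact hG _
    _ = 1 / t ^ (γ - 1) + C * (G (δ / t) / t ^ (γ - 1)) := by ring
  calc ENNReal.ofReal (|δ| / t ^ γ)
      ≤ ENNReal.ofReal (1 / t ^ (γ - 1) + C * (G (δ / t) / t ^ (γ - 1))) :=
        ENNReal.ofReal_le_ofReal hreal
    _ ≤ _ := by rw [← ENNReal.ofReal_mul hC]; exact ENNReal.ofReal_add_le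

lemma setLIntegral_le_add_const_mul_of_subset {X : Type*} [MeasurableSpace X] {μ : Measure X}
    {S T : Set X} (hST : S ⊆ T) {f g h : X → ENNReal} {c : ENNReal} (hc : c ≠ ⊤)
    (hg : Measurable g) (hfgh : ∀ x, f x ≤ g x + c * h x) :
    ∫⁻ x in S, f x ∂μ ≤ ∫⁻ x in S, g x ∂μ + c * ∫⁻ x in T, h x ∂μ := calc
  ∫⁻ x in S, f x ∂μ ≤ ∫⁻ x in S, (g x + c * h x) ∂μ := lintegral_mono hfgh
  _ = ∫⁻ x in S, g x ∂μ + c * ∫⁻ x in S, h x ∂μ := by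
    rw [lintegral_add_left hg, lintegral_const_mul' _ _ hc]
  _ ≤ ∫⁻ x in S, g x ∂μ + c * ∫⁻ x in T, h x ∂μ := by gcongr

lemma setLIntegral_closedBall_comp_sub_le {E : Type*} [NormedAddCommGroup E] [MeasurableSpace E]
    [OpensMeasurableSpace E] [MeasurableAdd E] [MeasurableNeg E] (μ : Measure E)
    [μ.IsAddLeftInvariant] [μ.IsNegInvariant]
    (f : E → ENNReal) {R : ℝ} {x : E} (hx : x ∈ closedBall 0 R) :
    ∫⁻ y in closedBall 0 R, f (x - y) ∂μ ≤ ∫⁻ z in closedBall 0 (R + R), f z ∂μ := by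
  rw [← lintegral_indicator (s := closedBall 0 (R + R)) measurableSet_closedBall,
    ← lintegral_sub_left_eq_self (μ := μ) ((closedBall 0 (R + R)).indicator f) x]
  calc ∫⁻ y in closedBall 0 R, f (x - y) ∂μ
      = ∫⁻ y in closedBall 0 R, (closedBall 0 (R + R)).indicator f (x - y) ∂μ := by
        refine setLIntegral_congr_fun measurableSet_closedBall fun y hy => ?_
        refine (indicator_of_mem ?_ f).symm
        rw [mem_closedBall_zero_iff] at hx hy ⊢
        exact (norm_sub_le x y).trans (add_le_add hx hy)
    _ ≤ _ := setLIntegral_le_lintegral _ _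

theorem setLIntegral_prod_norm_sub_rpow_neg_lt_top {E : Type*} [NormedAddCommGroup E]
    [NormedSpace ℝ E] [FiniteDimensional ℝ E] [MeasurableSpace E] [BorelSpace E]
    (μ : Measure E) [μ.IsAddHaarMeasure] (hE : 1 ≤ Module.finrank ℝ E) {α : ℝ}
    (hα : α < Module.finrank ℝ E) {S : Set E} (hS : Bornology.IsBounded S) :
    ∫⁻ p in S ×ˢ S, ENNReal.ofReal (‖p.1 - p.2‖ ^ (-α)) ∂μ.prod μ < ⊤ := by
  obtain ⟨R, hR⟩ := hS.subset_closedBall 0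
  set K : E → ENNReal := fun z => ENNReal.ofReal (‖z‖ ^ (-α))
  have hK : Measurable K := by fun_prop
  have hKint : ∫⁻ z in closedBall 0 (R + R), K z ∂μ < ⊤ := by
    refine IntegrableOn.setLIntegral_lt_top (LocallyIntegrable.integrableOn_isCompact ?_
      (isCompact_closedBall 0 _))
    refine locallyIntegrable_of_norm_le_rpow (C := 1) hE hα (ae_of_all _ fun z => ?_)
      (by fun_prop : Measurable fun z : E => ‖z‖ ^ (-α)).aestronglyMeasurable
    rw [one_mul, norm_of_nonneg (rpow_nonneg (norm_nonneg z) _)]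
  calc ∫⁻ p in S ×ˢ S, K (p.1 - p.2) ∂μ.prod μ
      ≤ ∫⁻ p in closedBall 0 R ×ˢ closedBall 0 R, K (p.1 - p.2) ∂μ.prod μ :=
        lintegral_mono_set (prod_mono hR hR)
    _ = ∫⁻ x in closedBall 0 R, ∫⁻ y in closedBall 0 R, K (x - y) ∂μ ∂μ := by
      rw [← Measure.prod_restrict, lintegral_prod (fun p : E × E => K (p.1 - p.2)) (by fun_prop)]
    _ ≤ ∫⁻ _ in closedBall 0 R, ∫⁻ z in closedBall 0 (R + R), K z ∂μ ∂μ :=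
      setLIntegral_mono' measurableSet_closedBall fun x hx =>
        setLIntegral_closedBall_comp_sub_le μ K hx
    _ < ⊤ := by
      rw [setLIntegral_const]
      exact ENNReal.mul_lt_top hKint measure_closedBall_lt_top

theorem stmt10_general (d : ℕ) (hd : 1 ≤ d) (s : ℝ) (hs : s ∈ Set.Ioo (0:ℝ) (1/2))
    (Ω : Set (EuclideanSpace ℝ (Fin d))) (hΩb : Bornology.IsBounded Ω)
    (F : ℝ → ℝ)
    (hF : F = fun ρ => ∫ r in (0:ℝ)..|ρ|, (|ρ| - r) / (1 + r^2) ^ (((d:ℝ) + 1 + 2*s)/2))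
    (C₂ : ℝ) (hC₂ : C₂ = 1 / (∫ r in (0:ℝ)..1, (1 + r^2) ^ (-(((d:ℝ) + 1 + 2*s)/2))))
    (v : EuclideanSpace ℝ (Fin d) → ℝ) :
    (∫⁻ p in Ω ×ˢ Ω, ENNReal.ofReal (1 / ‖p.1 - p.2‖ ^ ((d:ℝ) + 2*s - 1))) ≠ ⊤ ∧
    (∫⁻ p in Ω ×ˢ Ω, ENNReal.ofReal (|v p.1 - v p.2| / ‖p.1 - p.2‖ ^ ((d:ℝ) + 2*s)))
      ≤ (∫⁻ p in Ω ×ˢ Ω, ENNReal.ofReal (1 / ‖p.1 - p.2‖ ^ ((d:ℝ) + 2*s - 1)))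
        + ENNReal.ofReal C₂ *
          ∫⁻ p in (Ωᶜ ×ˢ Ωᶜ)ᶜ,
            ENNReal.ofReal (F ((v p.1 - v p.2) / ‖p.1 - p.2‖) / ‖p.1 - p.2‖ ^ ((d:ℝ) + 2*s - 1)) := by
  obtain ⟨hs0, hs1⟩ := hs
  subst hF hC₂
  have hdim : Module.finrank ℝ (EuclideanSpace ℝ (Fin d)) = d := finrank_euclideanSpace_fin
  have hC₂0 := (one_div_pos.2 (integral_one_add_sq_rpow_pos (-(((d:ℝ) + 1 + 2*s)/2)))).le
  refine ⟨?_, setLIntegral_le_add_const_mul_of_subset (fun p hp hpc => hpc.1 hp.1)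
    ENNReal.ofReal_ne_top (by fun_prop) fun p => ofReal_abs_div_rpow_le hC₂0
    (abs_le_one_add_div_integral_mul_integral _) (by positivity) _ (norm_nonneg _)⟩
  simp_rw [one_div, ← rpow_neg (norm_nonneg _), Measure.volume_eq_prod]
  exact (setLIntegral_prod_norm_sub_rpow_neg_lt_top volume (by rw [hdim]; exact hd)
    (by rw [hdim]; linarith) hΩb).ne

theorem stmt10 (d : ℕ) (hd : 1 ≤ d) (s : ℝ) (hs : s ∈ Set.Ioo (0:ℝ) (1/2))
    (Ω : Set (EuclideanSpace ℝ (Fin d))) (hΩb : Bornology.IsBounded Ω)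
    (hΩm : MeasurableSet Ω)
    (F : ℝ → ℝ)
    (hF : F = fun ρ => ∫ r in (0:ℝ)..|ρ|, (|ρ| - r) / (1 + r^2) ^ (((d:ℝ) + 1 + 2*s)/2))
    (C₂ : ℝ) (hC₂ : C₂ = 1 / (∫ r in (0:ℝ)..1, (1 + r^2) ^ (-(((d:ℝ) + 1 + 2*s)/2))))
    (v : EuclideanSpace ℝ (Fin d) → ℝ) (hv : Measurable v) :
    (∫⁻ p in Ω ×ˢ Ω, ENNReal.ofReal (1 / ‖p.1 - p.2‖ ^ ((d:ℝ) + 2*s - 1))) ≠ ⊤ ∧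
    (∫⁻ p in Ω ×ˢ Ω, ENNReal.ofReal (|v p.1 - v p.2| / ‖p.1 - p.2‖ ^ ((d:ℝ) + 2*s)))
      ≤ (∫⁻ p in Ω ×ˢ Ω, ENNReal.ofReal (1 / ‖p.1 - p.2‖ ^ ((d:ℝ) + 2*s - 1)))
        + ENNReal.ofReal C₂ *
          ∫⁻ p in (Ωᶜ ×ˢ Ωᶜ)ᶜ,
            ENNReal.ofReal (F ((v p.1 - v p.2) / ‖p.1 - p.2‖) / ‖p.1 - p.2‖ ^ ((d:ℝ) + 2*s - 1)) :=
  stmt10_general d hd s hs Ω hΩb F hF C₂ hC₂ v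
end

section
/- Let $s \in (0,1/2)$, $\Omega \subset \mathbb{R}^d$ a bounded Lipschitz domain, and $g \in L^\infty(\Omega^c)$. Let $u$ minimize the nonlocal area functional $I_s$ over the admissible class $\mathbb{V}^g$ and let $u_h$ minimize $I_s$ over a subset $\mathbb{V}^g_h \subset \mathbb{V}^g$ (a conforming finite element space). Then the geometric error satisfies, for every $v_h \in \mathbb{V}^g_h$, $e_s(u,u_h)^2 = C_{d,s}\iint_{Q_\Omega}\big(G_s(d_u(x,y)) - G_s(d_{u_h}(x,y))\big)\frac{d_u(x,y)-d_{v_h}(x,y)}{|x-y|^{d-1+2s}}\,dx\,dy$, and consequently $e_s(u,u_h)^2 \leq 2 C_{d,s} K \iint_{Q_\Omega}\frac{|(u-v_h)(x)-(u-v_h)(y)|}{|x-y|^{d+2s}}\,dx\,dy$, where $K = \int_0^\infty (1+r^2)^{-(d+1+2s)/2}\,dr$. -/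
open MeasureTheory Set

noncomputable section

/-- `G_s(ρ) = ∫_0^ρ (1+r²)^{-(d+1+2s)/2} dr`. -/
def Gs (d : ℕ) (s ρ : ℝ) : ℝ := ∫ r in (0:ℝ)..ρ, (1 + r^2) ^ (-(((d:ℝ) + 1 + 2*s)/2))

/-- `K = ∫_0^∞ (1+r²)^{-(d+1+2s)/2} dr = sup |G_s|`. -/
def Ks (d : ℕ) (s : ℝ) : ℝ := ∫ r in Set.Ioi (0:ℝ), (1 + r^2) ^ (-(((d:ℝ) + 1 + 2*s)/2))

/-- difference quotient `d_u(x,y) = (u(x)-u(y))/|x-y|`. -/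
def dq {d : ℕ} (u : EuclideanSpace ℝ (Fin d) → ℝ)
    (p : EuclideanSpace ℝ (Fin d) × EuclideanSpace ℝ (Fin d)) : ℝ :=
  (u p.1 - u p.2) / ‖p.1 - p.2‖

/-- `Q_Ω = (ℝᵈ×ℝᵈ) \ (Ωᶜ×Ωᶜ)`. -/
def QΩ {d : ℕ} (Ω : Set (EuclideanSpace ℝ (Fin d))) :
    Set (EuclideanSpace ℝ (Fin d) × EuclideanSpace ℝ (Fin d)) := (Ωᶜ ×ˢ Ωᶜ)ᶜ

/-- scaling constant `C_{d,s} = (1-2s)/α_d`. -/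
def Cds (d : ℕ) (s : ℝ) : ℝ :=
  (1 - 2*s) / (volume (Metric.ball (0 : EuclideanSpace ℝ (Fin d)) 1)).toReal

/-- the (rescaled) weighted form `a_w(w,φ)` written with `G_s`. -/
def Bform (d : ℕ) (s : ℝ) (Ω : Set (EuclideanSpace ℝ (Fin d)))
    (w φ : EuclideanSpace ℝ (Fin d) → ℝ) : ℝ :=
  Cds d s * ∫ p in QΩ Ω, Gs d s (dq w p) * dq φ p / ‖p.1 - p.2‖ ^ ((d:ℝ) - 1 + 2*s)

/-!
Testing both Euler–Lagrange relations with `uh - vh`, which lies in `V0h ⊆ V0`, shows that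
`G_s(d_u) - G_s(d_{uh})` is orthogonal to `d_{uh - vh}` (Galerkin orthogonality). Since
`d_{u - uh} = d_{u - vh} - d_{uh - vh}`, this gives the identity for `e_s(u, uh)²`. The bound follows
pointwise from `|G_s| ≤ K`, which holds because `G_s` is odd and its integrand is nonnegative, and
from `|d_w(x,y)| / |x-y|^{d-1+2s} = |w(x) - w(y)| / |x-y|^{d+2s}`.
-/

section Kernel

variable {d : ℕ} {s : ℝ}

lemma integrable_one_add_sq_rpow_neg {r : ℝ} (hr : 1 < r) :
    Integrable fun x : ℝ => (1 + x ^ 2) ^ (-(r / 2)) := by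
  simpa [neg_div] using
    integrable_rpow_neg_one_add_norm_sq (E := ℝ) (μ := volume) (by simpa using hr)

lemma one_add_sq_rpow_nonneg (a x : ℝ) : 0 ≤ (1 + x ^ 2) ^ a :=
  Real.rpow_nonneg (by positivity) _

lemma Gs_neg (ρ : ℝ) : Gs d s (-ρ) = -Gs d s ρ := by
  have h := intervalIntegral.integral_comp_neg (a := 0) (b := -ρ)
    (fun r : ℝ => (1 + r ^ 2) ^ (-(((d : ℝ) + 1 + 2 * s) / 2)))
  simp only [neg_sq, neg_neg, neg_zero] at h
  rw [Gs, h, intervalIntegral.integral_symm, Gs]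

lemma Gs_nonneg {ρ : ℝ} (hρ : 0 ≤ ρ) : 0 ≤ Gs d s ρ :=
  intervalIntegral.integral_nonneg hρ fun _ _ => one_add_sq_rpow_nonneg _ _

lemma Gs_le_Ks (hds : 0 < (d : ℝ) + 2 * s) {ρ : ℝ} (hρ : 0 ≤ ρ) : Gs d s ρ ≤ Ks d s := by
  rw [Gs, Ks, intervalIntegral.integral_of_le hρ]
  exact setIntegral_mono_set (integrable_one_add_sq_rpow_neg (by linarith)).integrableOn
    (ae_of_all _ fun _ => one_add_sq_rpow_nonneg _ _) Ioc_subset_Ioi_self.eventuallyLE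

lemma abs_Gs_le_Ks (hds : 0 < (d : ℝ) + 2 * s) (ρ : ℝ) : |Gs d s ρ| ≤ Ks d s := by
  rcases le_total 0 ρ with hρ | hρ
  · rw [abs_of_nonneg (Gs_nonneg hρ)]
    exact Gs_le_Ks hds hρ
  · have hneg : 0 ≤ -ρ := neg_nonneg.mpr hρ
    rw [← neg_neg ρ, Gs_neg, abs_neg, abs_of_nonneg (Gs_nonneg hneg)]
    exact Gs_le_Ks hds hneg

lemma abs_Gs_sub_Gs_le (hds : 0 < (d : ℝ) + 2 * s) (a b : ℝ) :
    |Gs d s a - Gs d s b| ≤ 2 * Ks d s :=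
  (abs_sub _ _).trans (by linarith [abs_Gs_le_Ks hds a, abs_Gs_le_Ks hds b])

end Kernel

lemma Cds_nonneg {d : ℕ} {s : ℝ} (hs : s ≤ 1 / 2) : 0 ≤ Cds d s :=
  div_nonneg (by linarith) ENNReal.toReal_nonneg

section DifferenceQuotient

variable {d : ℕ} {μ : Measure (EuclideanSpace ℝ (Fin d) × EuclideanSpace ℝ (Fin d))}
  {S : Set (EuclideanSpace ℝ (Fin d) × EuclideanSpace ℝ (Fin d))}

lemma abs_mul_dq_div_rpow_le {A K t : ℝ} (hA : |A| ≤ K) (w : EuclideanSpace ℝ (Fin d) → ℝ)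
    (p : EuclideanSpace ℝ (Fin d) × EuclideanSpace ℝ (Fin d)) :
    |A * dq w p / ‖p.1 - p.2‖ ^ t| ≤ K * (|w p.1 - w p.2| / ‖p.1 - p.2‖ ^ (t + 1)) := by
  have hK : 0 ≤ K := (abs_nonneg A).trans hA
  rcases (norm_nonneg (p.1 - p.2)).eq_or_lt with hn | hn
  · simp only [dq, ← hn, div_zero, mul_zero, zero_div, abs_zero]
    positivity
  · rw [dq, abs_div, abs_mul, abs_div, abs_of_pos hn, abs_of_pos (Real.rpow_pos_of_pos hn t),
      Real.rpow_add_one hn.ne', mul_div_assoc, div_div, mul_comm ‖p.1 - p.2‖]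
    gcongr

variable {A : EuclideanSpace ℝ (Fin d) × EuclideanSpace ℝ (Fin d) → ℝ} {t : ℝ}
  {u v w : EuclideanSpace ℝ (Fin d) → ℝ}

lemma setIntegral_mul_dq_sub_add
    (huv : IntegrableOn (fun p => A p * dq (fun x => u x - v x) p / ‖p.1 - p.2‖ ^ t) S μ)
    (hvw : IntegrableOn (fun p => A p * dq (fun x => v x - w x) p / ‖p.1 - p.2‖ ^ t) S μ) :
    ∫ p in S, A p * dq (fun x => u x - w x) p / ‖p.1 - p.2‖ ^ t ∂μ =
      (∫ p in S, A p * dq (fun x => u x - v x) p / ‖p.1 - p.2‖ ^ t ∂μ) +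
        ∫ p in S, A p * dq (fun x => v x - w x) p / ‖p.1 - p.2‖ ^ t ∂μ := by
  rw [← integral_add huv hvw]
  congr 1
  funext p
  simp only [dq]
  ring

lemma setIntegral_mul_dq_le {K : ℝ} (hA : ∀ p, |A p| ≤ K)
    (hw : IntegrableOn (fun p => |w p.1 - w p.2| / ‖p.1 - p.2‖ ^ (t + 1)) S μ) :
    ∫ p in S, A p * dq w p / ‖p.1 - p.2‖ ^ t ∂μ ≤
      K * ∫ p in S, |w p.1 - w p.2| / ‖p.1 - p.2‖ ^ (t + 1) ∂μ := by
  rw [← integral_const_mul]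
  exact (Real.le_norm_self _).trans <| norm_integral_le_of_norm_le (hw.const_mul K)
    (ae_of_all _ fun p => abs_mul_dq_div_rpow_le (hA p) w p)

end DifferenceQuotient

lemma Bform_sub_Bform {d : ℕ} {s : ℝ} {Ω : Set (EuclideanSpace ℝ (Fin d))}
    {v w φ : EuclideanSpace ℝ (Fin d) → ℝ}
    (hv : IntegrableOn (fun p => Gs d s (dq v p) * dq φ p /
      ‖p.1 - p.2‖ ^ ((d : ℝ) - 1 + 2 * s)) (QΩ Ω))
    (hvw : IntegrableOn (fun p => (Gs d s (dq v p) - Gs d s (dq w p)) * dq φ p /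
      ‖p.1 - p.2‖ ^ ((d : ℝ) - 1 + 2 * s)) (QΩ Ω)) :
    Bform d s Ω v φ - Bform d s Ω w φ = Cds d s * ∫ p in QΩ Ω,
      (Gs d s (dq v p) - Gs d s (dq w p)) * dq φ p / ‖p.1 - p.2‖ ^ ((d : ℝ) - 1 + 2 * s) := by
  have hGw : ∫ p in QΩ Ω, Gs d s (dq w p) * dq φ p / ‖p.1 - p.2‖ ^ ((d : ℝ) - 1 + 2 * s) =
      (∫ p in QΩ Ω, Gs d s (dq v p) * dq φ p / ‖p.1 - p.2‖ ^ ((d : ℝ) - 1 + 2 * s)) -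
        ∫ p in QΩ Ω, (Gs d s (dq v p) - Gs d s (dq w p)) * dq φ p /
          ‖p.1 - p.2‖ ^ ((d : ℝ) - 1 + 2 * s) := by
    rw [← integral_sub hv hvw]
    congr 1
    funext p
    ring
  rw [Bform, Bform, hGw]
  ring

theorem stmt12_general (d : ℕ) (s : ℝ) (hs : s ∈ Set.Ioo (0:ℝ) (1/2))
    (Ω : Set (EuclideanSpace ℝ (Fin d)))
    (V0 V0h : Set (EuclideanSpace ℝ (Fin d) → ℝ)) (hV : V0h ⊆ V0)
    (u uh vh : EuclideanSpace ℝ (Fin d) → ℝ)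
    -- Euler–Lagrange relations for the continuous and discrete minimizers
    (hu : ∀ φ ∈ V0, Bform d s Ω u φ = 0)
    (huh : ∀ φ ∈ V0h, Bform d s Ω uh φ = 0)
    (hmem : (fun x => uh x - vh x) ∈ V0h)
    -- integrability of the relevant integrands
    (hI1 : IntegrableOn (fun p => (Gs d s (dq u p) - Gs d s (dq uh p)) *
        dq (fun x => u x - uh x) p / ‖p.1 - p.2‖ ^ ((d:ℝ) - 1 + 2*s)) (QΩ Ω))
    (hI2 : IntegrableOn (fun p => (Gs d s (dq u p) - Gs d s (dq uh p)) *
        dq (fun x => uh x - vh x) p / ‖p.1 - p.2‖ ^ ((d:ℝ) - 1 + 2*s)) (QΩ Ω))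
    (hI3 : IntegrableOn (fun p => Gs d s (dq u p) *
        dq (fun x => uh x - vh x) p / ‖p.1 - p.2‖ ^ ((d:ℝ) - 1 + 2*s)) (QΩ Ω))
    (hI4 : IntegrableOn (fun p => |(u p.1 - vh p.1) - (u p.2 - vh p.2)| /
        ‖p.1 - p.2‖ ^ ((d:ℝ) + 2*s)) (QΩ Ω)) :
    (Cds d s * ∫ p in QΩ Ω, (Gs d s (dq u p) - Gs d s (dq uh p)) *
          dq (fun x => u x - uh x) p / ‖p.1 - p.2‖ ^ ((d:ℝ) - 1 + 2*s))
      = Cds d s * ∫ p in QΩ Ω, (Gs d s (dq u p) - Gs d s (dq uh p)) *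
          dq (fun x => u x - vh x) p / ‖p.1 - p.2‖ ^ ((d:ℝ) - 1 + 2*s) ∧
    (Cds d s * ∫ p in QΩ Ω, (Gs d s (dq u p) - Gs d s (dq uh p)) *
          dq (fun x => u x - uh x) p / ‖p.1 - p.2‖ ^ ((d:ℝ) - 1 + 2*s))
      ≤ 2 * Cds d s * Ks d s *
          ∫ p in QΩ Ω, |(u p.1 - vh p.1) - (u p.2 - vh p.2)| / ‖p.1 - p.2‖ ^ ((d:ℝ) + 2*s) := by
  obtain ⟨hs0, hs1⟩ := hs
  have horth := Bform_sub_Bform hI3 hI2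
  rw [hu _ (hV hmem), huh _ hmem, sub_self] at horth
  rw [show (d : ℝ) + 2 * s = (d - 1 + 2 * s) + 1 by ring] at hI4 ⊢
  have hbound := setIntegral_mul_dq_le (w := fun x => u x - vh x)
    (fun p => abs_Gs_sub_Gs_le (d := d) (by positivity) (dq u p) (dq uh p)) hI4
  rw [setIntegral_mul_dq_sub_add hI1 hI2] at hbound ⊢
  refine ⟨by rw [mul_add, ← horth, add_zero], ?_⟩
  linarith [mul_le_mul_of_nonneg_left hbound (Cds_nonneg (d := d) hs1.le)]

theorem stmt12 (d : ℕ) (hd : 1 ≤ d) (s : ℝ) (hs : s ∈ Set.Ioo (0:ℝ) (1/2))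
    (Ω : Set (EuclideanSpace ℝ (Fin d)))
    (V0 V0h : Set (EuclideanSpace ℝ (Fin d) → ℝ)) (hV : V0h ⊆ V0)
    (u uh vh : EuclideanSpace ℝ (Fin d) → ℝ)
    -- Euler–Lagrange relations for the continuous and discrete minimizers
    (hu : ∀ φ ∈ V0, Bform d s Ω u φ = 0)
    (huh : ∀ φ ∈ V0h, Bform d s Ω uh φ = 0)
    (hmem : (fun x => uh x - vh x) ∈ V0h)
    -- integrability of the relevant integrands
    (hI1 : IntegrableOn (fun p => (Gs d s (dq u p) - Gs d s (dq uh p)) *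
        dq (fun x => u x - uh x) p / ‖p.1 - p.2‖ ^ ((d:ℝ) - 1 + 2*s)) (QΩ Ω))
    (hI2 : IntegrableOn (fun p => (Gs d s (dq u p) - Gs d s (dq uh p)) *
        dq (fun x => uh x - vh x) p / ‖p.1 - p.2‖ ^ ((d:ℝ) - 1 + 2*s)) (QΩ Ω))
    (hI3 : IntegrableOn (fun p => Gs d s (dq u p) *
        dq (fun x => uh x - vh x) p / ‖p.1 - p.2‖ ^ ((d:ℝ) - 1 + 2*s)) (QΩ Ω))
    (hI4 : IntegrableOn (fun p => |(u p.1 - vh p.1) - (u p.2 - vh p.2)| /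
        ‖p.1 - p.2‖ ^ ((d:ℝ) + 2*s)) (QΩ Ω)) :
    (Cds d s * ∫ p in QΩ Ω, (Gs d s (dq u p) - Gs d s (dq uh p)) *
          dq (fun x => u x - uh x) p / ‖p.1 - p.2‖ ^ ((d:ℝ) - 1 + 2*s))
      = Cds d s * ∫ p in QΩ Ω, (Gs d s (dq u p) - Gs d s (dq uh p)) *
          dq (fun x => u x - vh x) p / ‖p.1 - p.2‖ ^ ((d:ℝ) - 1 + 2*s) ∧
    (Cds d s * ∫ p in QΩ Ω, (Gs d s (dq u p) - Gs d s (dq uh p)) *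
          dq (fun x => u x - uh x) p / ‖p.1 - p.2‖ ^ ((d:ℝ) - 1 + 2*s))
      ≤ 2 * Cds d s * Ks d s *
          ∫ p in QΩ Ω, |(u p.1 - vh p.1) - (u p.2 - vh p.2)| / ‖p.1 - p.2‖ ^ ((d:ℝ) + 2*s) :=
  stmt12_general d s hs Ω V0 V0h hV u uh vh hu huh hmem hI1 hI2 hI3 hI4

end
end
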